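/- arXiv:math/0310173 — 4 statements merged into one kernel-verified Lean document; each statement's English description precedes it below -/
import Mathlib

section
/- Let A be a commutative Noetherian Poisson algebra over a field k of characteristic 0. Then the nilradical J ⊆ A is a Poisson ideal: {j, a} ∈ J for all j ∈ J and a ∈ A. -/
/-!
A Hamiltonian vector field `{a, -}` is a derivation, and in characteristic zero a derivation
`D` maps nilpotents to nilpotents: if `x ^ n = 0`, then differentiating `x ^ (i + 1) * (D x) ^ k = 0`
and multiplying by `D x` gives `(i + 1) • x ^ i * (D x) ^ (k + 2) = 0`, so lowering the power of `x`
one step at a time yields `(D x) ^ (2 * n) = 0`.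
-/

/-- A Poisson bracket on a commutative `k`-algebra `A`: a `k`-bilinear,
skew-symmetric operation satisfying the Leibniz rule and the Jacobi identity. -/
def IsPoissonBracket (k : Type*) {A : Type*} [CommRing k] [CommRing A] [Algebra k A]
    (b : A → A → A) : Prop :=
  (∀ a : A, IsLinearMap k (b a)) ∧
  (∀ a : A, IsLinearMap k (fun x => b x a)) ∧
  (∀ x y : A, b x y = - b y x) ∧
  (∀ a x y : A, b a (x * y) = b a x * y + b a y * x) ∧
  (∀ a x y : A, b a (b x y) + b x (b y a) + b y (b a x) = 0)

namespace Derivation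

variable {R A : Type*} [CommSemiring R] [CommRing A] [Algebra R A] (D : Derivation R A A)

theorem mul_apply_pow (a : A) (n : ℕ) : a * D (a ^ n) = n • (a ^ n * D a) := by
  cases n with
  | zero => simp
  | succ n => simp only [leibniz_pow, Nat.add_sub_cancel, smul_eq_mul]; ring

theorem pow_mul_apply_pow_add_two_eq_zero [IsAddTorsionFree A] {x : A} {i k : ℕ}
    (h : x ^ (i + 1) * D x ^ k = 0) : x ^ i * D x ^ (k + 2) = 0 := by
  have hD : D x * D (x ^ (i + 1) * D x ^ k) = 0 := by rw [h, map_zero, mul_zero]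
  have hexpand : D x * D (x ^ (i + 1) * D x ^ k) =
      (i + 1) • (x ^ i * D x ^ (k + 2)) + k • (x ^ (i + 1) * D x ^ k * D (D x)) := by
    rw [leibniz, smul_eq_mul, smul_eq_mul, mul_add, ← mul_assoc, mul_comm (D x) (x ^ (i + 1)),
      mul_assoc, mul_apply_pow, leibniz_pow, Nat.add_sub_cancel]
    simp only [smul_eq_mul, nsmul_eq_mul]
    ring
  rw [hD, h, zero_mul, smul_zero, add_zero] at hexpand
  exact nsmul_right_injective (Nat.succ_ne_zero i) (by simpa using hexpand.symm)

theorem pow_mul_apply_pow_two_mul_eq_zero [IsAddTorsionFree A] {x : A} {i j : ℕ}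
    (h : x ^ (i + j) = 0) : x ^ i * D x ^ (2 * j) = 0 := by
  induction j generalizing i with
  | zero => simpa using h
  | succ j ih =>
    exact D.pow_mul_apply_pow_add_two_eq_zero (ih (by rwa [add_right_comm, add_assoc]))

theorem isNilpotent_apply [IsAddTorsionFree A] {x : A} (hx : IsNilpotent x) :
    IsNilpotent (D x) := by
  obtain ⟨n, hn⟩ := hx
  exact ⟨2 * n, by simpa using D.pow_mul_apply_pow_two_mul_eq_zero (i := 0) (by simpa using hn)⟩

end Derivation

namespace IsPoissonBracket

variable {k A : Type*} [CommRing k] [CommRing A] [Algebra k A] {b : A → A → A}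

def hamiltonian (hb : IsPoissonBracket k b) (a : A) : Derivation k A A :=
  Derivation.mk' (IsLinearMap.mk' (b a) (hb.1 a)) fun x y => by
    simp only [IsLinearMap.mk'_apply, hb.2.2.2.1, smul_eq_mul]
    ring

end IsPoissonBracket

theorem nilradical_isPoissonIdeal_general {k A : Type*} [Field k] [CharZero k] [CommRing A]
    [Algebra k A] (b : A → A → A) (hb : IsPoissonBracket k b) :
    ∀ x ∈ nilradical A, ∀ a : A, b x a ∈ nilradical A := by
  intro x hx a
  rw [mem_nilradical] at hx ⊢
  have : IsAddTorsionFree A := .of_isTorsionFree k A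
  rw [hb.2.2.1 x a]
  exact ((hb.hamiltonian a).isNilpotent_apply hx).neg

/-- The nilradical of a Noetherian Poisson algebra over a field of characteristic
zero is a Poisson ideal. -/
theorem nilradical_isPoissonIdeal {k A : Type*} [Field k] [CharZero k] [CommRing A]
    [Algebra k A] [IsNoetherianRing A] (b : A → A → A) (hb : IsPoissonBracket k b) :
    ∀ x ∈ nilradical A, ∀ a : A, b x a ∈ nilradical A :=
  nilradical_isPoissonIdeal_general b hb
end

section
/- Let K₀ ⊆ K be a finite separable field extension, K = K₀(x̄) with minimal polynomial P of x̄ over K₀. Let A be a discrete valuation ring with residue field K, valuation v, and uniformizer π, and let x ∈ A be a lift of x̄. Then v(P(x)) = 1 or v(P(x+π)) = 1, where P is lifted coefficient-wise via some section; more precisely, P(x+π) ≡ P(x) + P'(x)π mod π², and since P'(x̄) ≠ 0, at least one of P(x), P(x+π) has valuation exactly 1. -/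
/-!
Write `P(x + π) = P(x) + P'(x) π + k π²`. Since `P` reduces to the minimal polynomial of `x̄`,
`π` divides `P(x)` and hence `P(x + π)`. If `π²` divided both, it would divide `P'(x) π`, so `π`
would divide `P'(x)`; but `P'(x)` reduces to the derivative of the minimal polynomial at `x̄`,
which is nonzero by separability.
-/

open Polynomial IsLocalRing IsDiscreteValuationRing

theorem Polynomial.dvd_derivative_eval_of_sq_dvd_eval_of_sq_dvd_eval_add {R : Type*} [CommRing R]
    [IsDomain R] {π : R} (hπ : π ≠ 0) {P : R[X]} {x : R} (h₀ : π ^ 2 ∣ P.eval x)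
    (h₁ : π ^ 2 ∣ P.eval (x + π)) : π ∣ P.derivative.eval x := by
  obtain ⟨k, hk⟩ := P.binomExpansion x π
  have hlin : P.derivative.eval x * π = P.eval (x + π) - P.eval x - k * π ^ 2 := by
    rw [hk]; ring
  have hsq : π * π ∣ P.derivative.eval x * π := by
    rw [← sq, hlin]
    exact dvd_sub (dvd_sub h₁ h₀) (dvd_mul_left _ _)
  exact (mul_dvd_mul_iff_right hπ).mp hsq

theorem Polynomial.apply_eval_eq_aeval_of_map_eq_map {R S K₀ : Type*} [CommRing R] [CommRing S]
    [CommRing K₀] [Algebra K₀ S] (f : R →+* S) {P : R[X]} {Q : K₀[X]}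
    (h : P.map f = Q.map (algebraMap K₀ S)) (y : R) : f (P.eval y) = aeval (f y) Q := by
  rw [← eval₂_at_apply, ← eval_map, h, eval_map, aeval_def]

theorem Irreducible.dvd_iff_residue_eq_zero {A : Type*} [CommRing A] [IsDomain A]
    [IsDiscreteValuationRing A] {π : A} (hπ : Irreducible π) (a : A) :
    π ∣ a ↔ residue A a = 0 := by
  rw [residue_eq_zero_iff, hπ.maximalIdeal_eq, Ideal.mem_span_singleton]

namespace IsDiscreteValuationRing

variable {A : Type*} [CommRing A] [IsDomain A] [IsDiscreteValuationRing A] {π : A}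

theorem addVal_eq_one_iff (hπ : Irreducible π) {a : A} :
    addVal A a = 1 ↔ π ∣ a ∧ ¬ π ^ 2 ∣ a := by
  rw [← addVal_le_iff_dvd, ← addVal_le_iff_dvd, hπ.addVal_pow, addVal_uniformizer hπ]
  generalize addVal A a = v
  induction v using ENat.recTopCoe with
  | top => simp
  | coe n => norm_cast; omega

theorem addVal_eval_eq_one_or_addVal_eval_add_eq_one (hπ : Irreducible π) {P : A[X]} {x : A}
    (hx : π ∣ P.eval x) (hd : ¬ π ∣ P.derivative.eval x) :
    addVal A (P.eval x) = 1 ∨ addVal A (P.eval (x + π)) = 1 := by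
  have hxπ : π ∣ P.eval (x + π) :=
    (dvd_sub_left hx).mp (by simpa using sub_dvd_eval_sub (x + π) x P)
  simp only [addVal_eq_one_iff hπ, hx, hxπ, true_and, ← not_and_or]
  exact fun ⟨h₀, h₁⟩ ↦ hd (dvd_derivative_eval_of_sq_dvd_eval_of_sq_dvd_eval_add hπ.ne_zero h₀ h₁)

end IsDiscreteValuationRing

/-- Let `A` be a discrete valuation ring with uniformizer `π` and residue field `K`,
let `K₀ ⊆ K` be a subfield, `x ∈ A` a lift of `x̄ ∈ K` with `x̄` separable over `K₀`,
and let `P ∈ A[T]` be a coefficient-wise lift of the minimal polynomial of `x̄`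
over `K₀`. Then `v(P(x)) = 1` or `v(P(x + π)) = 1`. -/
theorem val_eval_lift_minpoly {A : Type*} [CommRing A] [IsDomain A]
    [IsDiscreteValuationRing A] (π : A) (hπ : Irreducible π)
    (K₀ : Subfield (IsLocalRing.ResidueField A)) (x : A)
    (hsep : (minpoly K₀ (IsLocalRing.residue A x)).Separable)
    (P : Polynomial A)
    (hP : P.map (IsLocalRing.residue A)
      = (minpoly K₀ (IsLocalRing.residue A x)).map
          (algebraMap K₀ (IsLocalRing.ResidueField A))) :
    IsDiscreteValuationRing.addVal A (P.eval x) = 1 ∨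
      IsDiscreteValuationRing.addVal A (P.eval (x + π)) = 1 := by
  have hP' : P.derivative.map (residue A)
      = (minpoly K₀ (residue A x)).derivative.map (algebraMap K₀ (ResidueField A)) := by
    rw [← derivative_map, hP, derivative_map]
  refine addVal_eval_eq_one_or_addVal_eval_add_eq_one hπ ?_ ?_
  · rw [hπ.dvd_iff_residue_eq_zero, apply_eval_eq_aeval_of_map_eq_map _ hP, minpoly.aeval]
  · rw [hπ.dvd_iff_residue_eq_zero, apply_eval_eq_aeval_of_map_eq_map _ hP']
    exact hsep.aeval_derivative_ne_zero (minpoly.aeval _ _)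
end

section
/- Let A be a regular local ring (more generally, an integrally closed Noetherian domain). Then the formal power series ring A[[t]] is integrally closed in its fraction field. -/
/-!
Over a Noetherian domain an element of the fraction field is integral iff it is almost integral,
so `A` is completely integrally closed in `K = Frac A`, and this property passes to power series:
if `d • f ^ n ∈ A⟦X⟧` for all `n` with `d ≠ 0`, writing `d = X ^ k * d'` with `d'(0) ≠ 0` gives
`d'(0) • f(0) ^ n ∈ A`, so `f(0) ∈ A`, and then `(f - f(0)) / X` is again almost integral.
Since `K⟦X⟧` is a discrete valuation ring, an element of `Frac A⟦X⟧` integral over `A⟦X⟧` lies in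
`K⟦X⟧`, where it is almost integral over `A⟦X⟧`, hence lies in `A⟦X⟧`.
-/

open PowerSeries
open scoped nonZeroDivisors

section AlmostIntegral

variable {R S T : Type*} [CommRing R] [CommRing S] [CommRing T] [Algebra R S] [Algebra R T]
  [Algebra S T] [IsScalarTower R S T]

lemma isAlmostIntegral_algebraMap_iff (h : Function.Injective (algebraMap S T)) {s : S} :
    IsAlmostIntegral R (algebraMap S T s) ↔ IsAlmostIntegral R s := by
  refine exists_congr fun r => and_congr_right fun _ => forall_congr' fun n => ?_
  rw [← map_pow, Algebra.smul_def, IsScalarTower.algebraMap_apply R S T, ← map_mul,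
    ← Algebra.smul_def]
  constructor
  · rintro ⟨a, ha⟩
    exact ⟨a, h (by rw [← IsScalarTower.algebraMap_apply, ha])⟩
  · rintro ⟨a, ha⟩
    exact ⟨a, by rw [IsScalarTower.algebraMap_apply R S T, ha]⟩

theorem isIntegrallyClosed_of_completeIntegralClosure_eq_bot [IsDomain S] [FaithfulSMul R S]
    [IsIntegrallyClosed S] (h : completeIntegralClosure R S = ⊥) : IsIntegrallyClosed R := by
  have := IsDomain.of_faithfulSMul R S
  let := FractionRing.liftAlgebra R (FractionRing S)
  rw [isIntegrallyClosed_iff (FractionRing R)]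
  intro z hz
  obtain ⟨s, hs⟩ := IsIntegrallyClosed.isIntegral_iff.mp
    ((hz.algebraMap (B := FractionRing S)).tower_top (A := S))
  have hs_mem : s ∈ completeIntegralClosure R S := by
    rw [mem_completeIntegralClosure,
      ← isAlmostIntegral_algebraMap_iff (IsFractionRing.injective S (FractionRing S)), hs,
      isAlmostIntegral_algebraMap_iff (algebraMap (FractionRing R) _).injective]
    exact hz.isAlmostIntegral
  obtain ⟨r, rfl⟩ := Algebra.mem_bot.mp (h ▸ hs_mem)
  refine ⟨r, (algebraMap (FractionRing R) (FractionRing S)).injective ?_⟩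
  rw [← hs, ← IsScalarTower.algebraMap_apply, ← IsScalarTower.algebraMap_apply]

end AlmostIntegral

namespace PowerSeries

variable {R S : Type*} [CommRing R] [CommRing S]

@[simp]
lemma constantCoeff_map (f : R →+* S) (φ : R⟦X⟧) :
    constantCoeff (map f φ) = f (constantCoeff φ) :=
  MvPowerSeries.constantCoeff_map f φ

variable [Algebra R S]

instance [FaithfulSMul R S] : FaithfulSMul R⟦X⟧ S⟦X⟧ :=
  (faithfulSMul_iff_algebraMap_injective _ _).mpr
    (map_injective _ (FaithfulSMul.algebraMap_injective R S))

lemma X_pow_mul_mem_range_algebraMap_iff [FaithfulSMul R S] {k : ℕ} {g : S⟦X⟧} :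
    X ^ k * g ∈ (algebraMap R⟦X⟧ S⟦X⟧).range ↔ g ∈ (algebraMap R⟦X⟧ S⟦X⟧).range := by
  refine ⟨fun ⟨b, hb⟩ => ?_, fun ⟨b, hb⟩ => ⟨X ^ k * b, by simp [algebraMap_apply'', ← hb]⟩⟩
  obtain ⟨c, rfl⟩ : X ^ k ∣ b := X_pow_dvd_iff.mpr fun n hn =>
    FaithfulSMul.algebraMap_injective R S <| by
      simpa [algebraMap_apply'', coeff_X_pow_mul', hn.not_ge] using congr(coeff n $hb)
  exact ⟨c, X_pow_mul_cancel (by simpa [algebraMap_apply''] using hb)⟩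

lemma isAlmostIntegral_of_X_mul [FaithfulSMul R S] {f : S⟦X⟧}
    (hf : IsAlmostIntegral R⟦X⟧ (X * f)) : IsAlmostIntegral R⟦X⟧ f := by
  obtain ⟨d, hd, h⟩ := hf
  refine ⟨d, hd, fun n => ?_⟩
  rw [← X_pow_mul_mem_range_algebraMap_iff (k := n)]
  simpa [mul_pow, Algebra.smul_def, mul_left_comm] using h n

lemma isAlmostIntegral_C {s : S} (hs : IsAlmostIntegral R s) :
    IsAlmostIntegral R⟦X⟧ (C s) := by
  obtain ⟨r, hr, h⟩ := hs
  refine ⟨C r, MvPowerSeries.mem_nonZeroDivisors_of_constantCoeff (constantCoeff_C r ▸ hr),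
    fun n => ?_⟩
  obtain ⟨a, ha⟩ := h n
  exact ⟨C a, by simp [algebraMap_apply'', ha, Algebra.smul_def]⟩

lemma isAlmostIntegral_constantCoeff [IsDomain R] [FaithfulSMul R S] {f : S⟦X⟧}
    (hf : IsAlmostIntegral R⟦X⟧ f) : IsAlmostIntegral R (constantCoeff f) := by
  obtain ⟨d, hd, h⟩ := hf
  refine ⟨constantCoeff d.divXPowOrder, mem_nonZeroDivisors_of_ne_zero ?_, fun n => ?_⟩
  · simpa [constantCoeff_divXPowOrder_eq_zero_iff] using nonZeroDivisors.ne_zero hd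
  obtain ⟨b, hb⟩ : d.divXPowOrder • f ^ n ∈ (algebraMap R⟦X⟧ S⟦X⟧).range := by
    rw [← X_pow_mul_mem_range_algebraMap_iff (k := d.order.toNat)]
    have := h n
    rwa [← X_pow_order_mul_divXPowOrder (f := d), Algebra.smul_def, map_mul, map_pow,
      algebraMap_apply'' S X, map_X, mul_assoc, ← Algebra.smul_def] at this
  exact ⟨constantCoeff b, by
    simpa [algebraMap_apply'', Algebra.smul_def] using congr(constantCoeff $hb)⟩

lemma isAlmostIntegral_coeff [IsDomain R] [FaithfulSMul R S] {f : S⟦X⟧}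
    (hf : IsAlmostIntegral R⟦X⟧ f) (n : ℕ) : IsAlmostIntegral R (coeff n f) := by
  induction n generalizing f with
  | zero => simpa using isAlmostIntegral_constantCoeff hf
  | succ n ih =>
    have hX : IsAlmostIntegral R⟦X⟧ (X * mk fun p => coeff (p + 1) f) := by
      rw [← mem_completeIntegralClosure, eq_sub_of_add_eq (eq_X_mul_shift_add_const f).symm]
      exact sub_mem hf (isAlmostIntegral_C (isAlmostIntegral_constantCoeff hf))
    simpa using ih (isAlmostIntegral_of_X_mul hX)

theorem completeIntegralClosure_eq_bot [IsDomain R] [FaithfulSMul R S]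
    (h : completeIntegralClosure R S = ⊥) : completeIntegralClosure R⟦X⟧ S⟦X⟧ = ⊥ := by
  refine eq_bot_iff.mpr fun f hf => ?_
  have (n : ℕ) : coeff n f ∈ Set.range (algebraMap R S) :=
    Algebra.mem_bot.mp (h ▸ isAlmostIntegral_coeff hf n)
  choose a ha using this
  exact Algebra.mem_bot.mpr ⟨mk a, by ext n; simp [algebraMap_apply'', ha]⟩

end PowerSeries

/-- The formal power series ring over an integrally closed Noetherian domain
(e.g. a regular local ring) is integrally closed in its fraction field. -/
theorem powerSeries_isIntegrallyClosed (A : Type*) [CommRing A] [IsDomain A]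
    [IsNoetherianRing A] [IsIntegrallyClosed A] :
    IsIntegrallyClosed (PowerSeries A) :=
  isIntegrallyClosed_of_completeIntegralClosure_eq_bot (S := (FractionRing A)⟦X⟧) <|
    PowerSeries.completeIntegralClosure_eq_bot <| by
      rw [completeIntegralClosure_eq_integralClosure, IsIntegrallyClosed.integralClosure_eq_bot]
end

section
/- Let A₀ be a Noetherian local domain of dimension 1 over a field k of characteristic 0, with integral closure A (a discrete valuation ring) in Frac(A₀). Then every k-linear derivation ξ₀: A₀ → A₀ extends to a k-linear derivation ξ: A → A; equivalently, the unique extension of ξ₀ to a derivation of Frac(A₀) maps A into A. -/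
/-!
Seidenberg's argument. Since `Frac A₀` is a localization of `A₀`, the derivation `ξ₀` extends to
a derivation `D` of `Frac A₀`. Over a field of characteristic zero, `a ↦ ∑ Dⁿ a / n! • tⁿ` is a
ring homomorphism `exp : Frac A₀ → (Frac A₀)⟦t⟧` sending `A₀` into `A₀⟦t⟧`. If `c xʲ ∈ A₀` for
all `j`, then `c · exp c · (exp x - x)ᵐ` is a combination of the series `exp (c xⁱ)` with
coefficients `c xʲ`, so it lies in `A₀⟦t⟧`; as `exp x - x = t · H` with `H(0) = D x`, its
`tᵐ`-coefficient `c² (D x)ᵐ` lies in `A₀`. Thus `D` preserves almost integrality, which for the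
Noetherian domain `A₀` is integrality.
-/

open Finset PowerSeries
open scoped Nat

namespace Derivation

section Localization

open KaehlerDifferential

variable {R S T N : Type*} [CommRing R] [CommRing S] [CommRing T] [Algebra R S] [Algebra R T]
  [Algebra S T] [IsScalarTower R S T] (M : Submonoid S) [IsLocalization M T]
  [AddCommGroup N] [Module R N] [Module S N] [Module T N] [IsScalarTower R S N]
  [IsScalarTower R T N] [IsScalarTower S T N]

noncomputable def extendOfIsLocalization (D : Derivation R S N) : Derivation R T N :=
  haveI := isLocalizedModule_id M N T
  ((IsLocalizedModule.lift M (map R R S T) D.liftKaehlerDifferential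
      (IsLocalizedModule.map_units LinearMap.id)).extendScalarsOfIsLocalization M T).compDer
    (KaehlerDifferential.D R T)

theorem extendOfIsLocalization_algebraMap (D : Derivation R S N) (s : S) :
    D.extendOfIsLocalization M (algebraMap S T s) = D s := by
  dsimp only [extendOfIsLocalization, coe_comp, LinearMap.coe_comp, LinearMap.coe_restrictScalars,
    coeFn_coe, Function.comp_apply, LinearMap.extendScalarsOfIsLocalization_apply']
  rw [← map_D R R S T, IsLocalizedModule.lift_apply, D.liftKaehlerDifferential_comp_D]

end Localization

section Restrict

variable {R R' A : Type*} [CommSemiring R] [CommSemiring R'] [CommRing A] [Algebra R R']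
  [Algebra R A] [Algebra R' A] [IsScalarTower R R' A]

def restrict (D : Derivation R A A) (S : Subalgebra R' A) (hS : ∀ x ∈ S, D x ∈ S) :
    Derivation R S S where
  toFun x := ⟨D x, hS x x.2⟩
  map_add' x y := Subtype.ext (D.map_add x y)
  map_smul' c x := Subtype.ext (D.map_smul c x)
  map_one_eq_zero' := Subtype.ext D.map_one_eq_zero
  leibniz' x y := Subtype.ext (D.leibniz x y)

end Restrict

section Iterate

variable {R A : Type*} [CommSemiring R] [CommSemiring A] [Algebra R A] (D : Derivation R A A)

theorem iterate_map_mul (n : ℕ) (a b : A) :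
    D^[n] (a * b) = ∑ ij ∈ antidiagonal n, n.choose ij.1 • (D^[ij.1] a * D^[ij.2] b) := by
  induction n with
  | zero => simp
  | succ n ih =>
    rw [Function.iterate_succ_apply', ih, map_sum,
      sum_antidiagonal_choose_succ_nsmul (fun i j => D^[i] a * D^[j] b)]
    simp only [map_nsmul, leibniz, smul_eq_mul, nsmul_add, sum_add_distrib, add_comm,
      ← Function.iterate_succ_apply' D]
    congr 1
    refine sum_congr rfl fun ij hij => ?_
    rw [Nat.choose_symm_of_eq_add (mem_antidiagonal.mp hij).symm, mul_comm]

theorem iterate_map_one (n : ℕ) : D^[n + 1] 1 = 0 := by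
  rw [Function.iterate_succ_apply, map_one_eq_zero, iterate_map_zero]

end Iterate

section Exp

variable {k A : Type*} [Field k] [CharZero k] [CommSemiring A] [Algebra k A] (D : Derivation k A A)

noncomputable def exp : A →+* A⟦X⟧ where
  toFun a := PowerSeries.mk fun n => (n ! : k)⁻¹ • D^[n] a
  map_one' := by
    ext (_ | n)
    · simp
    · simp [iterate_map_one]
  map_mul' a b := by
    ext n
    simp only [coeff_mk, coeff_mul, iterate_map_mul, smul_sum, smul_mul_smul_comm]
    refine sum_congr rfl fun ⟨i, j⟩ hij => ?_
    obtain rfl := mem_antidiagonal.mp hij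
    rw [← Nat.cast_smul_eq_nsmul k, smul_smul, Nat.choose_symm_add,
      ← Nat.add_choose_mul_factorial_mul_factorial i j]
    have : ((i + j).choose j : k) ≠ 0 := Nat.cast_ne_zero.mpr (Nat.choose_pos le_add_self).ne'
    push_cast
    field_simp
  map_zero' := by ext; simp
  map_add' a b := by ext; simp [iterate_map_add]

@[simp]
theorem coeff_exp (a : A) (n : ℕ) : coeff n (D.exp a) = (n ! : k)⁻¹ • D^[n] a := by
  simp [exp]

theorem constantCoeff_exp (a : A) : constantCoeff (D.exp a) = a := by
  simp [← coeff_zero_eq_constantCoeff_apply]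

theorem coeff_one_exp (a : A) : coeff 1 (D.exp a) = D a := by
  simp

end Exp

section Naturality

variable {k R A : Type*} [Field k] [CharZero k] [CommRing R] [CommRing A] [Algebra k R]
  [Algebra k A] [Algebra R A] [IsScalarTower k R A]
  {ξ : Derivation k R R} {D : Derivation k A A}

theorem exp_algebraMap (hD : ∀ r, D (algebraMap R A r) = algebraMap R A (ξ r)) (r : R) :
    D.exp (algebraMap R A r) = PowerSeries.map (algebraMap R A) (ξ.exp r) := by
  have hcomm : Function.Semiconj (algebraMap R A) ξ D := fun r => (hD r).symm
  ext n
  rw [coeff_exp, coeff_map, coeff_exp, ← (hcomm.iterate_right n) r]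
  exact (_root_.map_smul (IsScalarTower.toAlgHom k R A) _ _).symm

end Naturality

end Derivation

section AlmostIntegral

variable {k R A : Type*} [Field k] [CharZero k] [CommRing R] [CommRing A] [Algebra k R]
  [Algebra k A] [Algebra R A] [IsScalarTower k R A]
  {ξ : Derivation k R R} {D : Derivation k A A}

theorem IsAlmostIntegral.derivation_apply (hD : ∀ r, D (algebraMap R A r) = algebraMap R A (ξ r))
    {x : A} (hx : IsAlmostIntegral R x) : IsAlmostIntegral R (D x) := by
  obtain ⟨c, hc, hcx⟩ := hx
  refine ⟨c * c, mul_mem hc hc, fun m => ?_⟩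
  set ι := algebraMap R A
  have hcx_mul (j : ℕ) : ι c * x ^ j ∈ ι.range := by
    simpa only [Algebra.smul_def] using hcx j
  let T := (PowerSeries.map ι).range
  have coeff_mem : ∀ f ∈ T, ∀ n : ℕ, PowerSeries.coeff n f ∈ ι.range := by
    rintro _ ⟨g, rfl⟩ n
    exact ⟨PowerSeries.coeff n g, (coeff_map ι n g).symm⟩
  have exp_mem : ∀ a ∈ ι.range, D.exp a ∈ T := by
    rintro _ ⟨r, rfl⟩
    exact ⟨ξ.exp r, (Derivation.exp_algebraMap hD r).symm⟩
  have C_mem : ∀ a ∈ ι.range, C a ∈ T := by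
    rintro _ ⟨r, rfl⟩
    exact ⟨C r, map_C ι r⟩
  set H := PowerSeries.mk fun n => PowerSeries.coeff (n + 1) (D.exp x)
  have hH : X * H = D.exp x - C x := by
    conv_rhs => rw [eq_X_mul_shift_add_const (D.exp x), Derivation.constantCoeff_exp]
    ring
  have hmem : X ^ m * (D.exp (ι c) * C (ι c) * H ^ m) ∈ T := by
    have : X ^ m * (D.exp (ι c) * C (ι c) * H ^ m) = ∑ i ∈ range (m + 1),
        D.exp (ι c * x ^ i) * C ((-1) ^ (i + m) * (ι c * x ^ (m - i))) * (m.choose i : A⟦X⟧) := by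
      rw [mul_left_comm, ← mul_pow, hH, sub_pow, mul_sum]
      refine sum_congr rfl fun i _ => ?_
      simp only [map_mul, map_pow, map_neg, map_one]
      ring
    rw [this]
    exact sum_mem fun i _ => mul_mem (mul_mem (exp_mem _ (hcx_mul i))
      (C_mem _ (mul_mem (pow_mem (neg_mem (one_mem _)) _) (hcx_mul _)))) (natCast_mem _ _)
  have hcoeff : PowerSeries.coeff m (X ^ m * (D.exp (ι c) * C (ι c) * H ^ m))
      = ι c * ι c * D x ^ m := by
    rw [coeff_X_pow_mul', if_pos le_rfl, Nat.sub_self]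
    simp only [coeff_zero_eq_constantCoeff_apply, map_mul, map_pow, constantCoeff_C,
      Derivation.constantCoeff_exp]
    rw [← coeff_zero_eq_constantCoeff_apply, coeff_mk, Derivation.coeff_one_exp]
  rw [Algebra.smul_def, map_mul, ← hcoeff]
  exact coeff_mem _ hmem m

end AlmostIntegral

set_option synthInstance.maxHeartbeats 400000 in
theorem derivation_extends_to_integralClosure_dvr_general {k A₀ : Type*} [Field k] [CharZero k]
    [CommRing A₀] [IsDomain A₀] [IsNoetherianRing A₀] [Algebra k A₀]
    (ξ₀ : Derivation k A₀ A₀) :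
    ∃ ξ : Derivation k (integralClosure A₀ (FractionRing A₀))
        (integralClosure A₀ (FractionRing A₀)),
      ∀ a : A₀, ξ (algebraMap A₀ (integralClosure A₀ (FractionRing A₀)) a)
        = algebraMap A₀ (integralClosure A₀ (FractionRing A₀)) (ξ₀ a) := by
  let D : Derivation k (FractionRing A₀) (FractionRing A₀) :=
    ((Algebra.linearMap A₀ (FractionRing A₀)).compDer ξ₀).extendOfIsLocalization
      (nonZeroDivisors A₀)
  have hD (a : A₀) : D (algebraMap A₀ _ a) = algebraMap A₀ _ (ξ₀ a) :=
    Derivation.extendOfIsLocalization_algebraMap _ _ a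
  have hD_integral (x) (hx : x ∈ integralClosure A₀ (FractionRing A₀)) :
      D x ∈ integralClosure A₀ (FractionRing A₀) :=
    isAlmostIntegral_iff_isIntegral.mp (hx.isAlmostIntegral.derivation_apply hD)
  exact ⟨D.restrict _ hD_integral, fun a => Subtype.ext (hD a)⟩

set_option synthInstance.maxHeartbeats 400000 in
/-- Let `A₀` be a one-dimensional Noetherian local domain over a field `k` of
characteristic `0`, with integral closure `A` (a discrete valuation ring) in
`Frac A₀`. Then every `k`-linear derivation of `A₀` extends to a derivation of `A`. -/
theorem derivation_extends_to_integralClosure_dvr {k A₀ : Type*} [Field k] [CharZero k]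
    [CommRing A₀] [IsDomain A₀] [IsNoetherianRing A₀] [IsLocalRing A₀] [Algebra k A₀]
    (hdim : ringKrullDim A₀ = 1)
    (hdvr : IsDiscreteValuationRing (integralClosure A₀ (FractionRing A₀)))
    (ξ₀ : Derivation k A₀ A₀) :
    ∃ ξ : Derivation k (integralClosure A₀ (FractionRing A₀))
        (integralClosure A₀ (FractionRing A₀)),
      ∀ a : A₀, ξ (algebraMap A₀ (integralClosure A₀ (FractionRing A₀)) a)
        = algebraMap A₀ (integralClosure A₀ (FractionRing A₀)) (ξ₀ a) :=
  derivation_extends_to_integralClosure_dvr_general ξ₀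
end
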